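/- arXiv:1805.07748 — 4 statements merged into one kernel-verified Lean document; each statement's English description precedes it below -/
import Mathlib

section
/- Given an internal category (M, G, s, t, e, ∘) in the category of groups, the restriction of t to Ker s, together with the conjugation action of G (embedded via e) on Ker s, forms a crossed module. -/
/-- A crossed module `(H, G, mu)`: a group homomorphism together with an
action of `G` on `H` by automorphisms, satisfying the precrossed module identity and
the Peiffer identity. -/
structure CrossedModule (H G : Type) [Group H] [Group G] where
  μ : H →* G
  act : G →* MulAut H
  pre : ∀ (g : G) (h : H), μ (act g h) = g * μ h * g⁻¹
  peiffer : ∀ h h' : H, act (μ h) h' = h * h' * h⁻¹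

/-- An internal category in the category of groups: groups `M` (morphisms) and `G`
(objects), source and target homomorphisms `s, t : M → G`, an identity homomorphism
`e : G → M` with `s ∘ e = t ∘ e = id`, and a composition, defined on composable
pairs (`s x = t y`), which is a group homomorphism on the subgroup of composable
pairs and satisfies the category axioms. -/
structure InternalCatGrp (M G : Type) [Group M] [Group G] where
  s : M →* G
  t : M →* G
  e : G →* M
  se : ∀ g, s (e g) = g
  te : ∀ g, t (e g) = g
  /-- total composition function; only its values on composable pairs matter -/
  comp : M → M → M
  comp_mul : ∀ {x y x' y' : M}, s x = t y → s x' = t y' →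
    comp (x * x') (y * y') = comp x y * comp x' y'
  comp_one : comp 1 1 = 1
  s_comp : ∀ {x y : M}, s x = t y → s (comp x y) = s y
  t_comp : ∀ {x y : M}, s x = t y → t (comp x y) = t x
  comp_id : ∀ x, comp x (e (s x)) = x
  id_comp : ∀ x, comp (e (t x)) x = x
  comp_assoc : ∀ {x y z : M}, s x = t y → s y = t z →
    comp x (comp y z) = comp (comp x y) z

/-!
The composition of an internal category in groups is determined by the group law:
writing `x = (x * e (s x)⁻¹) * e (s x)` and `y = 1 * y`, the interchange law gives
`x ∘ y = x * e (t y)⁻¹ * y`. Applying the interchange law to `(e (t h) ∘ h) * (h' ∘ 1)`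
for `h' ∈ Ker s` and any `h` then yields `e (t h) * h' * e (t h)⁻¹ = h * h' * h⁻¹`,
which is the Peiffer identity for the conjugation action of `G` on `Ker s` through `e`.
-/

namespace InternalCatGrp

variable {M G : Type} [Group M] [Group G] (C : InternalCatGrp M G)

theorem comp_one_of_s_eq_one {x : M} (hx : C.s x = 1) : C.comp x 1 = x := by
  simpa [hx] using C.comp_id x

theorem comp_eq_mul_inv_mul {x y : M} (h : C.s x = C.t y) :
    C.comp x y = x * (C.e (C.t y))⁻¹ * y := by
  have hs : C.s (x * (C.e (C.s x))⁻¹) = 1 := by simp [C.se]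
  calc C.comp x y = C.comp (x * (C.e (C.s x))⁻¹ * C.e (C.s x)) (1 * y) := by group
    _ = C.comp (x * (C.e (C.s x))⁻¹) 1 * C.comp (C.e (C.s x)) y :=
        C.comp_mul (by simp [hs]) (by rw [C.se, h])
    _ = x * (C.e (C.t y))⁻¹ * y := by
        rw [C.comp_one_of_s_eq_one hs, h, C.id_comp]

theorem e_t_conj_eq_conj (h : M) {h' : M} (hh' : C.s h' = 1) :
    C.e (C.t h) * h' * (C.e (C.t h))⁻¹ = h * h' * h⁻¹ := by
  have interchange : h * h' = C.comp (C.e (C.t h) * h') h := by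
    calc h * h' = C.comp (C.e (C.t h)) h * C.comp h' 1 := by
          rw [C.id_comp, C.comp_one_of_s_eq_one hh']
      _ = C.comp (C.e (C.t h) * h') (h * 1) := (C.comp_mul (C.se _) (by simp [hh'])).symm
      _ = C.comp (C.e (C.t h) * h') h := by rw [mul_one]
  rw [interchange, C.comp_eq_mul_inv_mul (by simp [C.se, hh'])]
  group

def toCrossedModule : CrossedModule C.s.ker G where
  μ := C.t.comp C.s.ker.subtype
  act := MulAut.conjNormal.comp C.e
  pre g k := by simp [MulAut.conjNormal_apply, C.te]
  peiffer k k' := Subtype.ext <| by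
    simpa [MulAut.conjNormal_apply] using C.e_t_conj_eq_conj k k'.2

end InternalCatGrp

/-- Given an internal category `(M, G, s, t, e, ∘)` in groups, the
restriction of `t` to `Ker s`, together with the conjugation action of `G`
(embedded via `e`) on `Ker s`, forms a crossed module. -/
theorem internalCat_to_crossedModule {M G : Type} [Group M] [Group G]
    (C : InternalCatGrp M G) :
    ∃ X : CrossedModule C.s.ker G,
      (∀ k : C.s.ker, X.μ k = C.t (k : M)) ∧
      (∀ (g : G) (k : C.s.ker), ((X.act g k : C.s.ker) : M) = C.e g * (k : M) * (C.e g)⁻¹) :=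
  ⟨C.toCrossedModule, fun _ => rfl, fun _ _ => MulAut.conjNormal_apply _ _⟩
end

section
/- A crossed module (H, G, μ) is an abelian group object in the category of crossed modules if and only if H and G are abelian groups and the action of G on H is trivial. -/
namespace MonoidHom

variable {M : Type*} [MulOneClass M]

theorem map_pair_eq_mul (m : M × M →* M) (hl : ∀ a, m (a, 1) = a) (hr : ∀ b, m (1, b) = b)
    (a b : M) : m (a, b) = a * b := by
  calc m (a, b) = m ((a, 1) * (1, b)) := by simp
    _ = a * b := by rw [map_mul, hl, hr]

theorem mul_comm_of_unital_of_comm (m : M × M →* M) (hl : ∀ a, m (a, 1) = a)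
    (hr : ∀ b, m (1, b) = b) (hcomm : ∀ a b, m (a, b) = m (b, a)) (a b : M) :
    a * b = b * a := by
  rw [← m.map_pair_eq_mul hl hr, hcomm, m.map_pair_eq_mul hl hr]

end MonoidHom

namespace CrossedModule

variable {H G : Type} [Group H] [Group G] (X : CrossedModule H G)

theorem act_eq_self_of_mul_compatible (mH : H × H →* H) (mG : G × G →* G)
    (hmH : ∀ a b, mH (a, b) = a * b) (hmG : ∀ a b, mG (a, b) = a * b)
    (hact : ∀ (g g' : G) (h h' : H),
      mH (X.act g h, X.act g' h') = X.act (mG (g, g')) (mH (h, h')))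
    (g : G) (h : H) : X.act g h = h := by
  simpa [hmH, hmG] using (hact g 1 1 h).symm

end CrossedModule

/-- A crossed module `(H, G, μ)` is an abelian group object in the
category of crossed modules if and only if `H` and `G` are abelian groups and the
action of `G` on `H` is trivial.  An abelian group object structure is a morphism of
crossed modules `m : (H×H, G×G, μ×μ) → (H, G, μ)` from the product crossed module
(so `mH`, `mG` are group homomorphisms compatible with `μ` and with the componentwise
action), together with a unit, inverses, satisfying associativity and commutativity. -/
theorem crossedModule_abelian_group_object_iff {H G : Type} [Group H] [Group G]
    (X : CrossedModule H G) :
    (∃ (mH : H × H →* H) (mG : G × G →* G) (iH : H →* H) (iG : G →* G),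
      -- (mH, mG) is a morphism of crossed modules from the product crossed module
      (∀ p : H × H, X.μ (mH p) = mG (X.μ p.1, X.μ p.2)) ∧
      (∀ (g g' : G) (h h' : H),
        mH (X.act g h, X.act g' h') = X.act (mG (g, g')) (mH (h, h'))) ∧
      -- (iH, iG) is a morphism of crossed modules
      (∀ h : H, X.μ (iH h) = iG (X.μ h)) ∧
      (∀ (g : G) (h : H), iH (X.act g h) = X.act (iG g) (iH h)) ∧
      -- unit laws (the unit is the morphism from the zero crossed module)
      (∀ h : H, mH (h, 1) = h ∧ mH (1, h) = h) ∧
      (∀ g : G, mG (g, 1) = g ∧ mG (1, g) = g) ∧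
      -- associativity
      (∀ a b c : H, mH (mH (a, b), c) = mH (a, mH (b, c))) ∧
      (∀ a b c : G, mG (mG (a, b), c) = mG (a, mG (b, c))) ∧
      -- commutativity
      (∀ a b : H, mH (a, b) = mH (b, a)) ∧
      (∀ a b : G, mG (a, b) = mG (b, a)) ∧
      -- inverses
      (∀ h : H, mH (h, iH h) = 1) ∧
      (∀ g : G, mG (g, iG g) = 1))
    ↔ ((∀ h h' : H, h * h' = h' * h) ∧ (∀ g g' : G, g * g' = g' * g) ∧
       (∀ (g : G) (h : H), X.act g h = h)) := by
  constructor
  · rintro ⟨mH, mG, -, -, -, hact, -, -, hunitH, hunitG, -, -, hcommH, hcommG, -, -⟩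
    have hlH := fun a => (hunitH a).1
    have hrH := fun a => (hunitH a).2
    have hlG := fun a => (hunitG a).1
    have hrG := fun a => (hunitG a).2
    exact ⟨mH.mul_comm_of_unital_of_comm hlH hrH hcommH,
      mG.mul_comm_of_unital_of_comm hlG hrG hcommG,
      X.act_eq_self_of_mul_compatible mH mG (mH.map_pair_eq_mul hlH hrH)
        (mG.map_pair_eq_mul hlG hrG) hact⟩
  · rintro ⟨hcommH, hcommG, htriv⟩
    let _ : CommGroup H := { mul_comm := hcommH }
    let _ : CommGroup G := { mul_comm := hcommG }
    refine ⟨mulMonoidHom, mulMonoidHom, invMonoidHom, invMonoidHom, ?_⟩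
    simp [htriv, MulEquiv.eq_symm_apply, mul_comm, mul_left_comm]
end

section
/- For a crossed module (H, G, μ), the Moore complex of its nerve simplicial group is trivial in dimensions ≥ 2; in dimension 1 it is isomorphic to H and in dimension 0 it is G, with boundary map corresponding to μ. Consequently π₁ of the nerve is isomorphic to Ker μ and π₀ of the nerve is isomorphic to G/Im μ. -/
/-- The `n`-th level of the nerve of a crossed module `(H, G, μ)`:
`H ⋊ (⋯ (H ⋊ G) ⋯)` with `n` semidirect factors of `H`, realised as the set
`(Fin n → H) × G`. -/
abbrev NerveLvl (H G : Type) (n : ℕ) : Type := (Fin n → H) × G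

/-- The face maps of the nerve of a crossed module: `d₀` drops the first entry,
`dᵢ` (for `0 < i < n+1`) multiplies the `i`-th and `(i+1)`-st entries, and the last
face drops the last entry and multiplies `g` by `μ` of it. -/
def nerveFace {H G : Type} [Group H] [Group G] (X : CrossedModule H G) (n : ℕ)
    (i : Fin (n + 2)) (x : NerveLvl H G (n + 1)) : NerveLvl H G n :=
  (fun j : Fin n =>
      if (j : ℕ) + 1 < (i : ℕ) then x.1 j.castSucc
      else if (j : ℕ) + 1 = (i : ℕ) then x.1 j.castSucc * x.1 j.succ
      else x.1 j.succ,
   if (i : ℕ) = n + 1 then X.μ (x.1 (Fin.last n)) * x.2 else x.2)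

theorem NerveLvl.zero_ext_iff {H G : Type} {x y : NerveLvl H G 0} : x = y ↔ x.2 = y.2 := by
  simp [Prod.ext_iff, Subsingleton.elim x.1 y.1]

namespace CrossedModule

variable {H G : Type} [Group H] [Group G] (X : CrossedModule H G)

theorem nerveFace_zero (n : ℕ) (x : NerveLvl H G (n + 1)) :
    nerveFace X n 0 x = (Fin.tail x.1, x.2) := by
  ext j
  · simp [nerveFace, Fin.tail]
  · simp [nerveFace]

theorem nerveFace_one_fst_zero (n : ℕ) (x : NerveLvl H G (n + 2)) :
    (nerveFace X (n + 1) 1 x).1 0 = x.1 0 * x.1 1 := by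
  simp [nerveFace]

theorem nerveFace_last (n : ℕ) (x : NerveLvl H G (n + 1)) :
    nerveFace X n (Fin.last (n + 1)) x = (Fin.init x.1, X.μ (x.1 (Fin.last n)) * x.2) := by
  ext j
  · simp [nerveFace, Fin.init]
  · simp [nerveFace]

theorem eq_one_of_nerveFace_zero_of_nerveFace_one {n : ℕ} {x : NerveLvl H G (n + 2)}
    (h₀ : nerveFace X (n + 1) 0 x = ((fun _ => 1), 1))
    (h₁ : nerveFace X (n + 1) 1 x = ((fun _ => 1), 1)) :
    x = ((fun _ => 1), 1) := by
  rw [nerveFace_zero, Prod.mk.injEq] at h₀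
  obtain ⟨htail, hg⟩ := h₀
  have hsucc (j : Fin (n + 1)) : x.1 j.succ = 1 := congrFun htail j
  have hzero : x.1 0 = 1 := by
    have h01 : x.1 0 * x.1 1 = 1 := by rw [← nerveFace_one_fst_zero, h₁]
    rwa [show x.1 1 = 1 from hsucc 0, mul_one] at h01
  refine Prod.ext (funext fun j => ?_) hg
  cases j using Fin.cases with
  | zero => exact hzero
  | succ j => exact hsucc j

end CrossedModule

/-- For a crossed module `(H, G, μ)`, the Moore complex of the nerve is
trivial in dimensions `≥ 2`; in dimension `1` it is (isomorphic to) `H`, in dimension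
`0` it is `G`, and the boundary corresponds to `μ`.  Consequently `π₁` of the nerve is
isomorphic to `Ker μ` and `π₀` is isomorphic to `G/Im μ`. -/
theorem moore_complex_of_nerve {H G : Type} [Group H] [Group G]
    (X : CrossedModule H G) :
    -- (a) the Moore complex is trivial in dimensions ≥ 2:
    (∀ (n : ℕ) (x : NerveLvl H G (n + 2)),
      (∀ i : Fin (n + 2), nerveFace X (n + 1) i.castSucc x =
        ((fun _ => 1 : Fin (n + 1) → H), (1 : G))) →
      x = ((fun _ => 1 : Fin (n + 2) → H), (1 : G))) ∧
    -- (b) in dimension 1 the Moore complex is {(h, 1) | h ∈ H} ≅ H, with boundary μ: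
    (∀ x : NerveLvl H G 1,
      nerveFace X 0 0 x = ((fun _ => 1 : Fin 0 → H), (1 : G)) ↔ x.2 = 1) ∧
    (∀ h : H, nerveFace X 0 1 ((fun _ => h : Fin 1 → H), (1 : G)) =
      ((fun j => j.elim0 : Fin 0 → H), X.μ h)) ∧
    -- (c) π₁(Nerve) ≅ Ker μ: the cycles in dimension 1 correspond exactly to Ker μ
    --     (and by (a) there are no boundaries from dimension 2):
    (∀ x : NerveLvl H G 1,
      (nerveFace X 0 0 x = ((fun _ => 1 : Fin 0 → H), (1 : G)) ∧
       nerveFace X 0 1 x = ((fun _ => 1 : Fin 0 → H), (1 : G)))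
      ↔ (x.2 = 1 ∧ x.1 0 ∈ X.μ.ker)) ∧
    -- (d) π₀(Nerve) ≅ G/Im μ: the image of the boundary ∂₁ is exactly μ(H):
    (∀ g : G,
      (∃ x : NerveLvl H G 1,
        nerveFace X 0 0 x = ((fun _ => 1 : Fin 0 → H), (1 : G)) ∧
        nerveFace X 0 1 x = ((fun _ => 1 : Fin 0 → H), g))
      ↔ g ∈ X.μ.range) := by
  have d₀ (x : NerveLvl H G 1) : (nerveFace X 0 0 x).2 = x.2 :=
    congrArg Prod.snd (X.nerveFace_zero 0 x)
  have d₁ (x : NerveLvl H G 1) : (nerveFace X 0 1 x).2 = X.μ (x.1 0) * x.2 :=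
    congrArg Prod.snd (X.nerveFace_last 0 x)
  refine ⟨fun n x hx => X.eq_one_of_nerveFace_zero_of_nerveFace_one (hx 0) (hx 1),
    fun x => ?_, fun h => ?_, fun x => ?_, fun g => ?_⟩
  · rw [NerveLvl.zero_ext_iff, d₀]
  · rw [NerveLvl.zero_ext_iff, d₁, mul_one]
  · simp only [NerveLvl.zero_ext_iff, d₀, d₁, MonoidHom.mem_ker]
    exact and_congr_right fun hx => by rw [hx, mul_one]
  · simp only [NerveLvl.zero_ext_iff, d₀, d₁]
    constructor
    · rintro ⟨x, hx, rfl⟩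
      exact ⟨x.1 0, by rw [hx, mul_one]⟩
    · rintro ⟨h, rfl⟩
      exact ⟨((fun _ => h), 1), rfl, mul_one _⟩
end

section
/- Let 0 → (H',G',μ') → (H,G,μ) → (H'',G'',μ'') → 0 be a short exact sequence of crossed modules. Then the induced sequence of abelian groups G'/(μ'(H')·[G,G']) → G/(μ(H)·[G,G]) → G''/(μ''(H'')·[G'',G'']) → 0 is exact, where [G,G'] denotes the subgroup of G' generated by elements g·g'·g⁻¹·g'⁻¹ with g ∈ G, g' ∈ G' (G acting on G' via the inclusion G' ⊴ G). -/
/-- A morphism of crossed modules `(ρ, ν) : (H, G, μ) → (H', G', μ')`. -/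
structure XModHom {H G H' G' : Type} [Group H] [Group G] [Group H'] [Group G']
    (X : CrossedModule H G) (X' : CrossedModule H' G') where
  ρ : H →* H'
  ν : G →* G'
  commutes : ∀ h : H, ν (X.μ h) = X'.μ (ρ h)
  equivar : ∀ (g : G) (h : H), ρ (X.act g h) = X'.act (ν g) (ρ h)

/-! Everything is a coset computation. The maps of quotients are well defined because morphisms of
crossed modules carry `μ`-images to `μ`-images and commutators to commutators. Surjectivity of
`f'.ρ` and `f'.ν` gives `f'.ν(μ(H)·[G,G]) = μ''(H'')·[G'',G'']`, so exactness at `G/N` reduces to: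
if `f'.ν g = f'.ν n` with `n ∈ N`, then `n⁻¹ g = f.ν g'` and `(f.ν g')⁻¹ g = g⁻¹ n g ∈ N`. -/

/-- `G ⧸ X.abKer` is the abelianization of the cokernel of `X.μ`. -/
def CrossedModule.abKer {H G : Type} [Group H] [Group G] (X : CrossedModule H G) : Subgroup G :=
  X.μ.range ⊔ commutator G

namespace CrossedModule

variable {H G : Type} [Group H] [Group G] (X : CrossedModule H G)

instance range_μ_normal : X.μ.range.Normal where
  conj_mem := by
    rintro _ ⟨h, rfl⟩ g
    exact ⟨X.act g h, X.pre g h⟩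

instance abKer_normal : X.abKer.Normal :=
  Subgroup.sup_normal _ _

end CrossedModule

namespace XModHom

variable {H G H' G' : Type} [Group H] [Group G] [Group H'] [Group G']
  {X : CrossedModule H G} {Y : CrossedModule H' G'} (f : XModHom X Y)

theorem map_range_μ_le : X.μ.range.map f.ν ≤ Y.μ.range := by
  rintro _ ⟨_, ⟨h, rfl⟩, rfl⟩
  exact ⟨f.ρ h, (f.commutes h).symm⟩

theorem map_abKer_le : X.abKer.map f.ν ≤ Y.abKer := by
  rw [CrossedModule.abKer, Subgroup.map_sup, commutator_def, Subgroup.map_commutator]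
  exact sup_le_sup f.map_range_μ_le (Subgroup.commutator_mono le_top le_top)

theorem map_abKer_eq (hρ : Function.Surjective f.ρ) (hν : Function.Surjective f.ν) :
    X.abKer.map f.ν = Y.abKer := by
  have hrange : X.μ.range.map f.ν = Y.μ.range := by
    refine le_antisymm f.map_range_μ_le ?_
    rintro _ ⟨h', rfl⟩
    obtain ⟨h, rfl⟩ := hρ h'
    exact ⟨X.μ h, ⟨h, rfl⟩, f.commutes h⟩
  rw [CrossedModule.abKer, CrossedModule.abKer, Subgroup.map_sup, hrange, commutator_def,
    commutator_def, Subgroup.map_commutator, ← MonoidHom.range_eq_map, MonoidHom.range_eq_top.2 hν]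

theorem map_sup_comap_commutator_le_abKer :
    (X.μ.range ⊔ ⁅(⊤ : Subgroup G'), f.ν.range⁆.comap f.ν).map f.ν ≤ Y.abKer := by
  rw [Subgroup.map_sup]
  exact sup_le_sup f.map_range_μ_le
    ((Subgroup.map_comap_le _ _).trans (Subgroup.commutator_mono le_top le_top))

end XModHom

namespace MonoidHom

variable {G' G G'' : Type} [Group G'] [Group G] [Group G'']

theorem map_mem_map_iff_exists_inv_mul_mem {φ : G' →* G} {ψ : G →* G''} (hex : ψ.ker = φ.range)
    (N : Subgroup G) [N.Normal] (g : G) :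
    ψ g ∈ N.map ψ ↔ ∃ g', (φ g')⁻¹ * g ∈ N := by
  constructor
  · rintro ⟨n, hn, hψn⟩
    obtain ⟨g', hg'⟩ : n⁻¹ * g ∈ φ.range := by
      rw [← hex, mem_ker, map_mul, map_inv, hψn, inv_mul_cancel]
    refine ⟨g', ?_⟩
    have hconj : (φ g')⁻¹ * g = g⁻¹ * n * g⁻¹⁻¹ := by rw [hg']; group
    exact hconj ▸ ‹N.Normal›.conj_mem n hn g⁻¹
  · rintro ⟨g', hg'⟩
    have hψφ : ψ (φ g') = 1 := (hex.ge ⟨g', rfl⟩ : φ g' ∈ ψ.ker)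
    refine ⟨_, hg', ?_⟩
    rw [map_mul, map_inv, hψφ, inv_one, one_mul]

end MonoidHom

theorem five_term_tail_exactness_general {H' G' H G H'' G'' : Type}
    [Group H'] [Group G'] [Group H] [Group G] [Group H''] [Group G'']
    (X' : CrossedModule H' G') (X : CrossedModule H G) (X'' : CrossedModule H'' G'')
    (f : XModHom X' X) (f' : XModHom X X'')
    -- short exactness
    (hρsurj : Function.Surjective f'.ρ) (hνsurj : Function.Surjective f'.ν)
    (hνex : f'.ν.ker = f.ν.range) :
    -- notation: N' = μ'(H')·[G,G'] ⊆ G',  N = μ(H)·[G,G] ⊆ G,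
    --           N'' = μ''(H'')·[G'',G''] ⊆ G''
    (letI N' : Subgroup G' :=
        X'.μ.range ⊔ (⁅(⊤ : Subgroup G), f.ν.range⁆.comap f.ν)
     letI N : Subgroup G := X.μ.range ⊔ commutator G
     letI N'' : Subgroup G'' := X''.μ.range ⊔ commutator G''
     -- the maps of quotients are well defined:
     N'.map f.ν ≤ N ∧ N.map f'.ν ≤ N'' ∧
     -- exactness at G''/N'' (surjectivity):
     (∀ g'' : G'', ∃ g : G, (f'.ν g)⁻¹ * g'' ∈ N'') ∧
     -- exactness at G/N: the coset of g is killed in G''/N'' iff it comes from G'/N':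
     (∀ g : G, f'.ν g ∈ N'' ↔ ∃ g' : G', (f.ν g')⁻¹ * g ∈ N)) := by
  have hN'' : X.abKer.map f'.ν = X''.abKer := f'.map_abKer_eq hρsurj hνsurj
  refine ⟨f.map_sup_comap_commutator_le_abKer, f'.map_abKer_le, fun g'' => ?_, fun g => ?_⟩
  · obtain ⟨g, rfl⟩ := hνsurj g''
    exact ⟨g, by rw [inv_mul_cancel]; exact one_mem _⟩
  · have hexact := MonoidHom.map_mem_map_iff_exists_inv_mul_mem hνex X.abKer g
    rwa [hN''] at hexact

/-- A short exact sequence of crossed modules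
`0 → (H',G',μ') → (H,G,μ) → (H'',G'',μ'') → 0` induces an exact sequence of abelian
groups `G'/(μ'(H')·[G,G']) → G/(μ(H)·[G,G]) → G''/(μ''(H'')·[G'',G'']) → 0`.
Here `[G,G']` is the subgroup of `G'` generated by the commutators of elements of
`G` with elements of (the image of) `G'`; exactness is expressed at the level of
cosets.  -/
theorem five_term_tail_exactness {H' G' H G H'' G'' : Type}
    [Group H'] [Group G'] [Group H] [Group G] [Group H''] [Group G'']
    (X' : CrossedModule H' G') (X : CrossedModule H G) (X'' : CrossedModule H'' G'')
    (f : XModHom X' X) (f' : XModHom X X'')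
    -- short exactness
    (hρinj : Function.Injective f.ρ) (hνinj : Function.Injective f.ν)
    (hρsurj : Function.Surjective f'.ρ) (hνsurj : Function.Surjective f'.ν)
    (hρex : f'.ρ.ker = f.ρ.range) (hνex : f'.ν.ker = f.ν.range) :
    -- notation: N' = μ'(H')·[G,G'] ⊆ G',  N = μ(H)·[G,G] ⊆ G,
    --           N'' = μ''(H'')·[G'',G''] ⊆ G''
    (letI N' : Subgroup G' :=
        X'.μ.range ⊔ (⁅(⊤ : Subgroup G), f.ν.range⁆.comap f.ν)
     letI N : Subgroup G := X.μ.range ⊔ commutator G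
     letI N'' : Subgroup G'' := X''.μ.range ⊔ commutator G''
     -- the maps of quotients are well defined:
     N'.map f.ν ≤ N ∧ N.map f'.ν ≤ N'' ∧
     -- exactness at G''/N'' (surjectivity):
     (∀ g'' : G'', ∃ g : G, (f'.ν g)⁻¹ * g'' ∈ N'') ∧
     -- exactness at G/N: the coset of g is killed in G''/N'' iff it comes from G'/N':
     (∀ g : G, f'.ν g ∈ N'' ↔ ∃ g' : G', (f.ν g')⁻¹ * g ∈ N)) :=
  five_term_tail_exactness_general X' X X'' f f' hρsurj hνsurj hνex
end
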